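/- arXiv:1512.02240 — 4 statements merged into one kernel-verified Lean document; each statement's English description precedes it below -/
import Mathlib

section
/- If χ₁ and χ₂ are causality functions on a partially ordered set T, then the map χ_new defined on cuts of T by χ_new(C) := χ₁(C) ∪ χ₂(C) is also a causality function on T (it satisfies all four defining conditions: finite-union homomorphism, monotonicity, strict decrease on nonempty bounded cuts, and finite reachability). -/
/-!
Write `χ = χ₁ ⊔ χ₂`. The first three axioms for `χ` are immediate, and `χ C ⊆ C` on bounded
cuts. For finite reachability, unfold one step of `χ^[a+b]` and split it with the union
homomorphism property: this gives `χ^[a + b] C ⊆ χ₁^[a] C ∪ χ₂^[b] C` by induction on `a`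
and `b`. So a point that `χ₁` removes after `a` steps and `χ₂` after `b` steps is removed by
`χ` after `a + b` steps. Strict decrease then follows from reachability, since a fixed
nonempty cut would never lose its points.
-/

def IsCut {T : Type*} [PartialOrder T] (C : Set T) : Prop := IsLowerSet C

def IsBoundedCut {T : Type*} [PartialOrder T] (C : Set T) : Prop :=
  IsLowerSet C ∧ ∃ t : T, C ⊆ {s | s ≤ t}

def IsCausalityFunction {T : Type*} [PartialOrder T] (χ : Set T → Set T) : Prop :=
  (∀ C : Set T, IsCut C → IsCut (χ C)) ∧
  (∀ C D : Set T, IsCut C → IsCut D → χ (C ∪ D) = χ C ∪ χ D) ∧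
  (∀ C D : Set T, IsCut C → IsCut D → C ⊆ D → χ C ⊆ χ D) ∧
  (∀ C : Set T, IsBoundedCut C → C.Nonempty → χ C ⊂ C) ∧
  (∀ C : Set T, IsBoundedCut C → ∀ t ∈ C, ∃ n : ℕ, t ∉ χ^[n] C)

section

open Function Set

variable {T : Type*} [PartialOrder T]

theorem IsBoundedCut.mono {C D : Set T} (hD : IsCut D) (hDC : D ⊆ C) (hC : IsBoundedCut C) :
    IsBoundedCut D :=
  let ⟨t, ht⟩ := hC.2
  ⟨hD, t, hDC.trans ht⟩

section Iterate

variable {χ : Set T → Set T}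

theorem isCut_iterate (hcut : ∀ C, IsCut C → IsCut (χ C)) (n : ℕ) {C : Set T} (hC : IsCut C) :
    IsCut (χ^[n] C) :=
  MapsTo.iterate (s := {C | IsCut C}) hcut n hC

theorem iterate_union (hcut : ∀ C, IsCut C → IsCut (χ C))
    (hunion : ∀ C D, IsCut C → IsCut D → χ (C ∪ D) = χ C ∪ χ D) (n : ℕ) {C D : Set T}
    (hC : IsCut C) (hD : IsCut D) : χ^[n] (C ∪ D) = χ^[n] C ∪ χ^[n] D := by
  induction n generalizing C D with
  | zero => rfl
  | succ n ih =>
    simp only [iterate_succ_apply]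
    rw [hunion C D hC hD, ih (hcut C hC) (hcut D hD)]

theorem iterate_mono (hcut : ∀ C, IsCut C → IsCut (χ C))
    (hunion : ∀ C D, IsCut C → IsCut D → χ (C ∪ D) = χ C ∪ χ D) (n : ℕ) {C D : Set T}
    (hC : IsCut C) (hD : IsCut D) (hCD : C ⊆ D) : χ^[n] C ⊆ χ^[n] D :=
  calc χ^[n] C ⊆ χ^[n] C ∪ χ^[n] D := subset_union_left
    _ = χ^[n] D := by rw [← iterate_union hcut hunion n hC hD, union_eq_right.2 hCD]

theorem iterate_subset (hcut : ∀ C, IsCut C → IsCut (χ C))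
    (hsub : ∀ C, IsBoundedCut C → χ C ⊆ C) (n : ℕ) {C : Set T} (hC : IsBoundedCut C) :
    χ^[n] C ⊆ C := by
  induction n with
  | zero => rfl
  | succ n ih =>
    rw [iterate_succ_apply']
    exact (hsub _ (hC.mono (isCut_iterate hcut n hC.1) ih)).trans ih

end Iterate

namespace IsCausalityFunction

variable {χ χ₁ χ₂ : Set T → Set T}

theorem apply_empty (h : IsCausalityFunction χ) : χ ∅ = ∅ := by
  obtain ⟨hcut, -, hmono, -, hreach⟩ := h
  refine eq_empty_of_forall_notMem fun y hy => ?_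
  obtain ⟨n, hn⟩ := hreach (Iic y) ⟨isLowerSet_Iic y, y, subset_rfl⟩ y le_rfl
  cases n with
  | zero => exact hn le_rfl
  | succ m =>
    -- `χ ∅` lies below every `χ D`, so `y` survives every iterate of `χ` on `Iic y`
    rw [iterate_succ_apply'] at hn
    exact hn (hmono _ _ isLowerSet_empty (isCut_iterate hcut m (isLowerSet_Iic y))
      (empty_subset _) hy)

theorem apply_subset (h : IsCausalityFunction χ) {C : Set T} (hC : IsBoundedCut C) : χ C ⊆ C := by
  rcases C.eq_empty_or_nonempty with rfl | hne
  · rw [h.apply_empty]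
  · exact (h.2.2.2.1 C hC hne).subset

theorem isBoundedCut_apply (h : IsCausalityFunction χ) {C : Set T} (hC : IsBoundedCut C) :
    IsBoundedCut (χ C) :=
  hC.mono (h.1 C hC.1) (h.apply_subset hC)

theorem isCut_sup (h₁ : IsCausalityFunction χ₁) (h₂ : IsCausalityFunction χ₂) {C : Set T}
    (hC : IsCut C) : IsCut ((χ₁ ⊔ χ₂) C) :=
  (h₁.1 C hC).union (h₂.1 C hC)

theorem sup_union (h₁ : IsCausalityFunction χ₁) (h₂ : IsCausalityFunction χ₂) {C D : Set T}
    (hC : IsCut C) (hD : IsCut D) : (χ₁ ⊔ χ₂) (C ∪ D) = (χ₁ ⊔ χ₂) C ∪ (χ₁ ⊔ χ₂) D := by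
  change χ₁ (C ∪ D) ∪ χ₂ (C ∪ D) = (χ₁ C ∪ χ₂ C) ∪ (χ₁ D ∪ χ₂ D)
  rw [h₁.2.1 C D hC hD, h₂.2.1 C D hC hD, union_union_union_comm]

theorem sup_subset (h₁ : IsCausalityFunction χ₁) (h₂ : IsCausalityFunction χ₂) {C : Set T}
    (hC : IsBoundedCut C) : (χ₁ ⊔ χ₂) C ⊆ C :=
  union_subset (h₁.apply_subset hC) (h₂.apply_subset hC)

theorem iterate_sup_subset (h₁ : IsCausalityFunction χ₁) (h₂ : IsCausalityFunction χ₂)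
    (a b : ℕ) {C : Set T} (hC : IsBoundedCut C) :
    (χ₁ ⊔ χ₂)^[a + b] C ⊆ χ₁^[a] C ∪ χ₂^[b] C := by
  have hcut : ∀ C, IsCut C → IsCut ((χ₁ ⊔ χ₂) C) := fun C => h₁.isCut_sup h₂
  have hsub := iterate_subset hcut (fun C => h₁.sup_subset h₂)
  induction a generalizing b C with
  | zero => exact (hsub _ hC).trans subset_union_left
  | succ a iha =>
    induction b generalizing C with
    | zero => exact (hsub _ hC).trans subset_union_right
    | succ b ihb =>
      have hC₁ := h₁.isBoundedCut_apply hC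
      have hC₂ := h₂.isBoundedCut_apply hC
      rw [show a + 1 + (b + 1) = a + (b + 1) + 1 by omega, iterate_succ_apply]
      change (χ₁ ⊔ χ₂)^[a + (b + 1)] (χ₁ C ∪ χ₂ C) ⊆ _
      rw [iterate_union hcut (fun C D => h₁.sup_union h₂) _ hC₁.1 hC₂.1]
      have hmono₁ := iterate_mono h₁.1 h₁.2.1 (a + 1) hC₂.1 hC.1 (h₂.apply_subset hC)
      have hmono₂ := iterate_mono h₂.1 h₂.2.1 (b + 1) hC₁.1 hC.1 (h₁.apply_subset hC)
      refine union_subset ?_ ?_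
      · calc _ ⊆ χ₁^[a] (χ₁ C) ∪ χ₂^[b + 1] (χ₁ C) := iha (b + 1) hC₁
          _ ⊆ _ := union_subset_union (iterate_succ_apply χ₁ a C).subset hmono₂
      · calc _ = (χ₁ ⊔ χ₂)^[a + 1 + b] (χ₂ C) := by rw [add_right_comm, add_assoc]
          _ ⊆ χ₁^[a + 1] (χ₂ C) ∪ χ₂^[b] (χ₂ C) := ihb hC₂
          _ ⊆ _ := union_subset_union hmono₁ (iterate_succ_apply χ₂ b C).subset

end IsCausalityFunction

end

/-- The union of two causality functions is again a causality function. -/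
theorem isCausalityFunction_union {T : Type*} [PartialOrder T]
    (χ₁ χ₂ : Set T → Set T)
    (h₁ : IsCausalityFunction χ₁) (h₂ : IsCausalityFunction χ₂) :
    IsCausalityFunction (fun C => χ₁ C ∪ χ₂ C) := by
  have hreach : ∀ C, IsBoundedCut C → ∀ t ∈ C, ∃ n, t ∉ (χ₁ ⊔ χ₂)^[n] C := by
    intro C hC t ht
    obtain ⟨a, ha⟩ := h₁.2.2.2.2 C hC t ht
    obtain ⟨b, hb⟩ := h₂.2.2.2.2 C hC t ht
    exact ⟨a + b, fun hab => (h₁.iterate_sup_subset h₂ a b hC hab).elim ha hb⟩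
  refine ⟨fun C => h₁.isCut_sup h₂, fun C D => h₁.sup_union h₂,
    fun C D hC hD hCD => Set.union_subset_union (h₁.2.2.1 C D hC hD hCD) (h₂.2.2.1 C D hC hD hCD),
    fun C hC ⟨t, ht⟩ => ⟨h₁.sup_subset h₂ hC, fun hle => ?_⟩, hreach⟩
  obtain ⟨n, hn⟩ := hreach C hC t ht
  exact hn ((Function.iterate_fixed (subset_antisymm (h₁.sup_subset h₂ hC) hle) n).symm ▸ ht)
end

section
/- Let T be a subset of ℝ and let χ : T → T be a monotone function (t ≤ u implies χ(t) ≤ χ(u)). Suppose that for every u ∈ T there exists δ > 0 such that t − χ(t) > δ for all t ∈ T with t ≤ u (in particular χ(t) < t for all t ∈ T). Then for all t, t' ∈ T there exists n ∈ ℕ such that χⁿ(t') ≤ t, where χⁿ denotes the n-fold iterate of χ. -/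
theorem exists_le_of_forall_succ_le_sub {α : Type*} [AddCommGroup α] [LinearOrder α]
    [IsOrderedAddMonoid α] [Archimedean α] (a : ℕ → α) {δ : α} (hδ : 0 < δ)
    (h : ∀ n, a (n + 1) ≤ a n - δ) (c : α) : ∃ n, a n ≤ c := by
  have hlin : ∀ n : ℕ, a n ≤ a 0 - n • δ := by
    intro n
    induction n with
    | zero => simp
    | succ n ih =>
      calc a (n + 1) ≤ a n - δ := h n
        _ ≤ a 0 - n • δ - δ := sub_le_sub_right ih δ
        _ = a 0 - (n + 1) • δ := by rw [succ_nsmul]; abel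
  obtain ⟨n, hn⟩ := Archimedean.arch (a 0 - c) hδ
  exact ⟨n, (hlin n).trans (sub_le_comm.2 hn)⟩

theorem iterate_le_of_uniform_delay_general (T : Set ℝ) (χ : T → T)
    (hdelay : ∀ u : T, ∃ δ > (0 : ℝ), ∀ t : T, t ≤ u → (t : ℝ) - (χ t : ℝ) > δ) :
    ∀ t t' : T, ∃ n : ℕ, χ^[n] t' ≤ t := by
  intro t t'
  have hχ : χ ≤ id := fun x => by
    show χ x ≤ x
    obtain ⟨ε, hε, h⟩ := hdelay x
    exact Subtype.coe_le_coe.1 (by linarith [h x le_rfl])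
  -- Every iterate stays below `t'`, so each step drops by the delay `δ` attached to `t'`.
  obtain ⟨δ, hδ, hstep⟩ := hdelay t'
  refine exists_le_of_forall_succ_le_sub (fun n => (χ^[n] t' : ℝ)) hδ (fun n => ?_) t
  have := hstep _ (Function.iterate_le_id_of_le_id hχ n t')
  rw [Function.iterate_succ_apply']
  linarith

/-- For a subset `T ⊆ ℝ` and a monotone `χ : T → T` which is uniformly
strictly decreasing below every point of `T`, any point `t ∈ T` is reached
from any `t' ∈ T` in a finite number of causal steps. -/
theorem iterate_le_of_uniform_delay (T : Set ℝ) (χ : T → T)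
    (hmono : Monotone χ)
    (hdelay : ∀ u : T, ∃ δ > (0 : ℝ), ∀ t : T, t ≤ u → (t : ℝ) - (χ t : ℝ) > δ) :
    ∀ t t' : T, ∃ n : ℕ, χ^[n] t' ≤ t :=
  iterate_le_of_uniform_delay_general T χ hdelay
end

section
/- Let T be a subset of ℝ and let χ : T → T be a monotone function such that for every u ∈ T there exists δ > 0 with t − χ(t) > δ for all t ∈ T with t ≤ u. Suppose in addition that there exists t₀ ∈ T such that χ(t) ≤ t₀ for all t ∈ T (this holds in particular when T has a greatest element). Then for every t ∈ T there exists n ∈ ℕ such that χⁿ(t') < t for all t' ∈ T, where χⁿ denotes the n-fold iterate of χ. -/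
/-!
Below `t₀` every step of `χ` lowers the value by at least `δ`, and after one step every orbit
lies below `t₀`. Hence `χ^[k+1] t' ≤ t₀ - k δ` uniformly in `t'`, and the Archimedean property
makes this smaller than any prescribed `t`.
-/

section UniformDrop

variable {α K : Type*} [AddCommGroup K] [LinearOrder K] [IsOrderedAddMonoid K]
  (f : α → α) (h : α → K) {c δ : K}

theorem iterate_succ_le_sub_nsmul (hb : ∀ x, h (f x) ≤ c)
    (hdrop : ∀ x, h x ≤ c → δ ≤ h x - h (f x)) (k : ℕ) (x : α) :
    h (f^[k + 1] x) ≤ c - k • δ := by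
  induction k with
  | zero => simpa using hb x
  | succ k ih =>
    have hstep : δ ≤ h (f^[k + 1] x) - h (f^[k + 2] x) := by
      rw [Function.iterate_succ_apply' f (k + 1)]
      exact hdrop _ (by rw [Function.iterate_succ_apply']; exact hb _)
    calc h (f^[k + 2] x) ≤ h (f^[k + 1] x) - δ := le_sub_comm.mp hstep
      _ ≤ c - k • δ - δ := sub_le_sub_right ih δ
      _ = c - (k + 1) • δ := by rw [succ_nsmul, sub_sub]

theorem exists_forall_iterate_lt [Archimedean K] (hb : ∀ x, h (f x) ≤ c)
    (hdrop : ∀ x, h x ≤ c → δ ≤ h x - h (f x)) (hδ : 0 < δ) (b : K) :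
    ∃ n : ℕ, ∀ x, h (f^[n] x) < b := by
  obtain ⟨N, hN⟩ := Archimedean.arch (c - b + δ) hδ
  refine ⟨N + 1, fun x => ?_⟩
  calc h (f^[N + 1] x) ≤ c - N • δ := iterate_succ_le_sub_nsmul f h hb hdrop N x
    _ ≤ c - (c - b + δ) := sub_le_sub_left hN c
    _ = b - δ := by abel
    _ < b := sub_lt_self b hδ

end UniformDrop

theorem iterate_lt_of_uniform_delay_of_bounded_range_general (T : Set ℝ) (χ : T → T)
    (hdelay : ∀ u : T, ∃ δ > (0 : ℝ), ∀ t : T, t ≤ u → (t : ℝ) - (χ t : ℝ) > δ)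
    (t₀ : T) (hb : ∀ t : T, χ t ≤ t₀) :
    ∀ t : T, ∃ n : ℕ, ∀ t' : T, χ^[n] t' < t := by
  intro t
  obtain ⟨δ, hδ, hdrop⟩ := hdelay t₀
  exact exists_forall_iterate_lt χ Subtype.val hb
    (fun x hx => (hdrop x hx).le) hδ t

/-- For a subset `T ⊆ ℝ` and a monotone `χ : T → T` which is uniformly
strictly decreasing below every point of `T` and whose range is bounded above
by a point `t₀ ∈ T`, every point `t ∈ T` is reached from anywhere in a
uniformly finite number of causal steps. -/
theorem iterate_lt_of_uniform_delay_of_bounded_range (T : Set ℝ) (χ : T → T)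
    (hmono : Monotone χ)
    (hdelay : ∀ u : T, ∃ δ > (0 : ℝ), ∀ t : T, t ≤ u → (t : ℝ) - (χ t : ℝ) > δ)
    (t₀ : T) (hb : ∀ t : T, χ t ≤ t₀) :
    ∀ t : T, ∃ n : ℕ, ∀ t' : T, χ^[n] t' < t :=
  iterate_lt_of_uniform_delay_of_bounded_range_general T χ hdelay t₀ hb
end

section
/- Let α, β, γ, δ be finite types and let Φ : Matrix (α×β) (α×β) ℂ →ₗ Matrix (γ×δ) (γ×δ) ℂ and Ψ : Matrix α α ℂ →ₗ Matrix γ γ ℂ be linear maps. Then the following are equivalent: (1) Tr_δ(Φ(ρ)) = Ψ(Tr_β(ρ)) for every ρ ∈ Matrix (α×β) (α×β) ℂ (i.e., the output on system C does not depend on the input on system B); (2) the partial trace over δ of the Choi matrix of Φ equals the reindexing, along the natural bijection γ × (α×β) ≃ (γ×α) × β, of R_Ψ ⊗ I_β, where R_Ψ is the Choi matrix of Ψ and I_β is the identity matrix indexed by β. -/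
open Kronecker

/-- The partial trace over the second tensor factor of a matrix indexed by a
product type. -/
noncomputable def ptrace {σ τ : Type*} [Fintype τ]
    (M : Matrix (σ × τ) (σ × τ) ℂ) : Matrix σ σ ℂ :=
  Matrix.of fun s s' => ∑ t : τ, M (s, t) (s', t)

/-- The Choi matrix `R_Θ = ∑_{x,y} Θ(E_{xy}) ⊗ E_{xy}` of a linear map `Θ` on
matrices. -/
noncomputable def choi {μ ν : Type*} [Fintype μ] [DecidableEq μ]
    (Θ : Matrix μ μ ℂ →ₗ[ℂ] Matrix ν ν ℂ) : Matrix (ν × μ) (ν × μ) ℂ :=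
  ∑ x : μ, ∑ y : μ,
    (Θ (Matrix.single x y 1)) ⊗ₖ (Matrix.single x y 1)

/-
Both conditions compare the two linear maps `Tr_δ ∘ Φ` and `Ψ ∘ Tr_β`: condition (1) says
they are equal, and condition (2) says their Choi matrices are equal, because the Choi matrix of
`Tr_δ ∘ Φ` is the partial trace over `δ` of `R_Φ`, while that of `Ψ ∘ Tr_β` is `R_Ψ ⊗ I_β` up to
reassociating indices. A linear map is determined by its Choi matrix, since the entries of
`R_Θ` are those of `Θ` on the matrix units.
-/

section PartialTrace

variable {σ τ : Type*} [Fintype τ]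

noncomputable def ptraceLinearMap : Matrix (σ × τ) (σ × τ) ℂ →ₗ[ℂ] Matrix σ σ ℂ where
  toFun := ptrace
  map_add' M N := by
    ext s s'
    simp only [ptrace, Matrix.of_apply, Matrix.add_apply, Finset.sum_add_distrib]
  map_smul' c M := by
    ext s s'
    simp only [ptrace, Matrix.of_apply, Matrix.smul_apply, smul_eq_mul, Finset.mul_sum,
      RingHom.id_apply]

@[simp]
lemma ptraceLinearMap_apply (M : Matrix (σ × τ) (σ × τ) ℂ) : ptraceLinearMap M = ptrace M :=
  rfl

lemma ptrace_single [DecidableEq σ] [DecidableEq τ] (a a' : σ) (b b' : τ) (c : ℂ) :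
    ptrace (Matrix.single (a, b) (a', b') c) = (1 : Matrix τ τ ℂ) b b' • Matrix.single a a' c := by
  ext s s'
  simp only [ptrace, Matrix.of_apply, Matrix.single_apply, Prod.mk.injEq, Matrix.smul_apply,
    Matrix.one_apply, smul_eq_mul]
  by_cases hb : b = b'
  · subst hb
    simp [ite_and, Finset.sum_ite_eq]
  · refine (Finset.sum_eq_zero fun t _ => if_neg ?_).trans (by simp [hb])
    grind

end PartialTrace

section Choi

variable {μ ν : Type*} [Fintype μ] [DecidableEq μ]

lemma choi_apply (Θ : Matrix μ μ ℂ →ₗ[ℂ] Matrix ν ν ℂ) (n n' : ν) (x x' : μ) :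
    choi Θ (n, x) (n', x') = Θ (Matrix.single x x' 1) n n' := by
  simp [choi, Matrix.sum_apply, Matrix.single_apply, Matrix.kroneckerMap_apply,
    ite_and]

lemma choi_injective : Function.Injective (choi : (Matrix μ μ ℂ →ₗ[ℂ] Matrix ν ν ℂ) → _) := by
  intro Θ Θ' h
  refine Matrix.ext_linearMap (R := ℂ) fun x x' => LinearMap.ext_ring ?_
  ext n n'
  simpa only [choi_apply, LinearMap.comp_apply, Matrix.singleLinearMap_apply] using
    congr_fun₂ h (n, x) (n', x')

end Choi

lemma choi_ptraceLinearMap_comp {μ γ δ : Type*} [Fintype μ] [DecidableEq μ] [Fintype δ]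
    (Φ : Matrix μ μ ℂ →ₗ[ℂ] Matrix (γ × δ) (γ × δ) ℂ) :
    choi (ptraceLinearMap ∘ₗ Φ) =
      Matrix.of fun (p q : γ × μ) => ∑ d : δ, choi Φ ((p.1, d), p.2) ((q.1, d), q.2) := by
  ext ⟨c, x⟩ ⟨c', x'⟩
  simp only [choi_apply, LinearMap.comp_apply, ptraceLinearMap_apply, ptrace, Matrix.of_apply]

lemma choi_comp_ptraceLinearMap {α β γ : Type*} [Fintype α] [DecidableEq α] [Fintype β]
    [DecidableEq β] (Ψ : Matrix α α ℂ →ₗ[ℂ] Matrix γ γ ℂ) :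
    choi (Ψ ∘ₗ ptraceLinearMap) =
      Matrix.reindex (Equiv.prodAssoc γ α β) (Equiv.prodAssoc γ α β)
        (choi Ψ ⊗ₖ (1 : Matrix β β ℂ)) := by
  ext ⟨c, a, b⟩ ⟨c', a', b'⟩
  simp only [Matrix.reindex_apply, Matrix.submatrix_apply, Equiv.prodAssoc_symm_apply,
    Matrix.kroneckerMap_apply, choi_apply, LinearMap.comp_apply, ptraceLinearMap_apply,
    ptrace_single, map_smul, Matrix.smul_apply, smul_eq_mul, mul_comm]

theorem ptrace_comp_iff_choi_ptrace_eq_general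
    {α β γ δ : Type*} [Fintype α] [DecidableEq α] [Fintype β] [DecidableEq β]
    [Fintype δ]
    (Φ : Matrix (α × β) (α × β) ℂ →ₗ[ℂ] Matrix (γ × δ) (γ × δ) ℂ)
    (Ψ : Matrix α α ℂ →ₗ[ℂ] Matrix γ γ ℂ) :
    (∀ ρ : Matrix (α × β) (α × β) ℂ, ptrace (Φ ρ) = Ψ (ptrace ρ)) ↔
    (Matrix.of fun (p q : γ × (α × β)) =>
        ∑ d : δ, choi Φ ((p.1, d), p.2) ((q.1, d), q.2)) =
      Matrix.reindex (Equiv.prodAssoc γ α β) (Equiv.prodAssoc γ α β)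
        (choi Ψ ⊗ₖ (1 : Matrix β β ℂ)) := by
  rw [← choi_ptraceLinearMap_comp, ← choi_comp_ptraceLinearMap, choi_injective.eq_iff,
    LinearMap.ext_iff]
  rfl

/-- A linear map `Φ` on matrices over `α × β` with output over `γ × δ` satisfies
`Tr_δ ∘ Φ = Ψ ∘ Tr_β` if and only if the partial trace over `δ` of the Choi
matrix of `Φ` equals the reindexing along `γ × (α × β) ≃ (γ × α) × β` of
`R_Ψ ⊗ I_β`. -/
theorem ptrace_comp_iff_choi_ptrace_eq
    {α β γ δ : Type*} [Fintype α] [DecidableEq α] [Fintype β] [DecidableEq β]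
    [Fintype γ] [Fintype δ]
    (Φ : Matrix (α × β) (α × β) ℂ →ₗ[ℂ] Matrix (γ × δ) (γ × δ) ℂ)
    (Ψ : Matrix α α ℂ →ₗ[ℂ] Matrix γ γ ℂ) :
    (∀ ρ : Matrix (α × β) (α × β) ℂ, ptrace (Φ ρ) = Ψ (ptrace ρ)) ↔
    (Matrix.of fun (p q : γ × (α × β)) =>
        ∑ d : δ, choi Φ ((p.1, d), p.2) ((q.1, d), q.2)) =
      Matrix.reindex (Equiv.prodAssoc γ α β) (Equiv.prodAssoc γ α β)
        (choi Ψ ⊗ₖ (1 : Matrix β β ℂ)) :=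
  ptrace_comp_iff_choi_ptrace_eq_general Φ Ψ
end
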